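/- Let A be a set of at least four alternatives, let D ⊆ L(A) be a domain, and let a ∈ A. If D is directly connected, then the restricted domain D_{-a} = D_{A∖{a}} is directly connected. -/

import Mathlib

/-!
Common definitions for formalizing Condorcet domains.

A linear order on a finite set `A : Finset α` of alternatives is encoded as a
duplicate-free list enumerating the elements of `A` from most preferred (head)
to least preferred (last).
-/

variable {α : Type*}

/-- `l` is a linear order on the finite set `A` of alternatives. -/
def IsLinOrd [DecidableEq α] (A : Finset α) (l : List α) : Prop :=
  l.Nodup ∧ l.toFinset = A

/-- The restriction of a linear order `l` to the subset `S` of alternatives. -/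
def restrictOrd [DecidableEq α] (l : List α) (S : Finset α) : List α :=
  l.filter (fun x => decide (x ∈ S))

/-- The restriction of a domain `D` to the subset `S` of alternatives. -/
def restrictDom [DecidableEq α] (D : Set (List α)) (S : Finset α) : Set (List α) :=
  (fun l => restrictOrd l S) '' D

/-- The never-condition `x N (k+1)`: no linear order in `E` ranks `x` in
position `k+1` (positions are counted from `1`, so `k : Fin 3` is the
zero-based index).  `k = 0` is a never-top condition, `k = 2` a never-bottom
condition. -/
def NeverCond (E : Set (List α)) (x : α) (k : Fin 3) : Prop :=
  ∀ l ∈ E, l[(k : ℕ)]? ≠ some x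

/-- The set of never-conditions (encoded as pairs `(x, k)`) satisfied by a
domain `E` on the triple `T`. -/
def NeverConds (T : Finset α) (E : Set (List α)) : Set (α × Fin 3) :=
  {p | p.1 ∈ T ∧ NeverCond E p.1 p.2}

/-- The set of peak-pit conditions (never-top or never-bottom conditions)
satisfied by a domain `E` on the triple `T`. -/
def PeakPitConds (T : Finset α) (E : Set (List α)) : Set (α × Fin 3) :=
  {p | p.1 ∈ T ∧ (p.2 = 0 ∨ p.2 = 2) ∧ NeverCond E p.1 p.2}

/-- `D` is a Condorcet domain on `A`: a set of linear orders on `A` whose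
restriction to every triple of distinct alternatives satisfies some
never-condition. -/
def IsCondorcetDomain [DecidableEq α] (A : Finset α) (D : Set (List α)) : Prop :=
  (∀ l ∈ D, IsLinOrd A l) ∧
    ∀ a b c : α, a ∈ A → b ∈ A → c ∈ A → a ≠ b → a ≠ c → b ≠ c →
      ∃ x ∈ ({a, b, c} : Finset α), ∃ k : Fin 3,
        NeverCond (restrictDom D {a, b, c}) x k

/-- `D` is a peak-pit Condorcet domain on `A`: a set of linear orders on `A`
whose restriction to every triple of distinct alternatives satisfies a
never-top or a never-bottom condition. -/
def IsPeakPitDomain [DecidableEq α] (A : Finset α) (D : Set (List α)) : Prop :=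
  (∀ l ∈ D, IsLinOrd A l) ∧
    ∀ a b c : α, a ∈ A → b ∈ A → c ∈ A → a ≠ b → a ≠ c → b ≠ c →
      ∃ x ∈ ({a, b, c} : Finset α),
        NeverCond (restrictDom D {a, b, c}) x 0 ∨
          NeverCond (restrictDom D {a, b, c}) x 2

/-- Two linear orders are alike if they differ by a swap of two adjacent
alternatives. -/
def Alike (R T : List α) : Prop :=
  ∃ (l₁ l₂ : List α) (x y : α), x ≠ y ∧
    R = l₁ ++ x :: y :: l₂ ∧ T = l₁ ++ y :: x :: l₂

/-- `P` is a path of alike linear orders on `L(A)`. -/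
def IsPathOn [DecidableEq α] (A : Finset α) (P : List (List α)) : Prop :=
  P ≠ [] ∧ (∀ l ∈ P, IsLinOrd A l) ∧ P.Chain' Alike

/-- `P` is a path of alike linear orders on `L(A)` connecting `R` and `T`. -/
def IsPath [DecidableEq α] (A : Finset α) (P : List (List α)) (R T : List α) : Prop :=
  IsPathOn A P ∧ P.head? = some R ∧ P.getLast? = some T

/-- `P` is a geodesic on `L(A)` connecting `R` and `T`: a path of alike linear
orders of minimal length among all such paths. -/
def IsGeodesic [DecidableEq α] (A : Finset α) (P : List (List α)) (R T : List α) : Prop :=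
  IsPath A P R T ∧ ∀ Q : List (List α), IsPath A Q R T → P.length ≤ Q.length

/-- The switching pair of alternatives between two alike linear orders (as an
unordered pair); `none` if the two lists do not differ. -/
def switchPair? [DecidableEq α] (R T : List α) : Option (Sym2 α) :=
  ((R.zip T).find? (fun p => decide (p.1 ≠ p.2))).map (Function.uncurry Sym2.mk)

/-- `S(P)`: the sequence of switching pairs of a path of alike linear orders. -/
def switchSeq [DecidableEq α] (P : List (List α)) : List (Sym2 α) :=
  (P.zip P.tail).filterMap (fun p => switchPair? p.1 p.2)

/-- The restriction of a path to the subset `B`: restrict every member and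
remove consecutive duplicates. -/
def restrictPath [DecidableEq α] (P : List (List α)) (B : Finset α) : List (List α) :=
  (P.map (fun l => restrictOrd l B)).destutter (· ≠ ·)

/-- `D` is connected: any two of its members are joined by a path of alike
linear orders lying entirely in `D`. -/
def ConnectedDomain [DecidableEq α] (A : Finset α) (D : Set (List α)) : Prop :=
  ∀ R ∈ D, ∀ T ∈ D, ∃ P : List (List α), IsPath A P R T ∧ ∀ l ∈ P, l ∈ D

/-- `D` is directly connected: any two of its members are joined by a geodesic
lying entirely in `D`. -/
def DirectlyConnectedDomain [DecidableEq α] (A : Finset α) (D : Set (List α)) : Prop :=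
  ∀ R ∈ D, ∀ T ∈ D, ∃ P : List (List α), IsGeodesic A P R T ∧ ∀ l ∈ P, l ∈ D

/-- Two unordered pairs of alternatives are disjoint. -/
def DisjointPair (p q : Sym2 α) : Prop := ∀ x : α, x ∈ p → x ∉ q

/-- One swap of an adjacent disjoint pair of switching pairs in a sequence of
switching pairs. -/
inductive AdjSwap : List (Sym2 α) → List (Sym2 α) → Prop
  | swap (l₁ l₂ : List (Sym2 α)) (p q : Sym2 α) (h : DisjointPair p q) :
      AdjSwap (l₁ ++ p :: q :: l₂) (l₁ ++ q :: p :: l₂)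

/-- Two paths are equivalent if their sequences of switching pairs differ by a
finite number of swaps of adjacent disjoint pairs of switching pairs. -/
def PathEquiv [DecidableEq α] (P Q : List (List α)) : Prop :=
  Relation.ReflTransGen AdjSwap (switchSeq P) (switchSeq Q)

/-- Two domains are isomorphic if some bijection between the underlying sets of
alternatives maps one domain onto the other (acting position-wise on linear
orders). -/
def DomIsomorphic (A B : Finset α) (D E : Set (List α)) : Prop :=
  ∃ f : α → α, Set.BijOn f ↑A ↑B ∧ E = (fun l => l.map f) '' D

/-!
Let `κ(R, T)` be the Kendall distance, the number of pairs of alternatives that `R` and `T` rank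
in opposite order. An alike step changes `κ(·, T)` by at most one, and swapping an adjacent pair
that `T` ranks the other way lowers it by exactly one, so the geodesics from `R` to `T` are the
paths with `κ(R, T) + 1` members. Restricting a geodesic to `B ⊆ A` and deleting repetitions
gives a path in `D_B`. A step of the original path either survives the restriction or reverses a
pair not contained in `B`, and `κ(R, T)` is `κ(R_B, T_B)` plus the number of discordant pairs not
contained in `B`; hence the restricted path has at most `κ(R_B, T_B) + 1` members.
-/

theorem Alike.ne {U V : List α} (h : Alike U V) : U ≠ V := by
  obtain ⟨l₁, l₂, x, y, hxy, rfl, rfl⟩ := h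
  simp [hxy]

section

open List

variable [DecidableEq α]

theorem idxOf_lt_or_gt_of_ne {l : List α} {p q : α} (hp : p ∈ l) (hpq : p ≠ q) :
    idxOf p l < idxOf q l ∨ idxOf q l < idxOf p l :=
  Nat.lt_or_gt_of_ne fun h => hpq ((idxOf_inj hp).mp h)

theorem idxOf_filter_lt_idxOf_filter_iff {f : α → Bool} {p q : α} (hp : f p) (hq : f q)
    (l : List α) : idxOf p (l.filter f) < idxOf q (l.filter f) ↔ idxOf p l < idxOf q l := by
  induction l with
  | nil => simp
  | cons b l ih =>
    by_cases hb : f b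
    · rw [filter_cons_of_pos hb]
      rcases eq_or_ne b p with rfl | hbp
      · rcases eq_or_ne b q with rfl | hbq <;> simp [idxOf_cons_ne, *]
      · rcases eq_or_ne b q with rfl | hbq <;> simp [idxOf_cons_ne, *]
    · have hbp : b ≠ p := by rintro rfl; simp_all
      have hbq : b ≠ q := by rintro rfl; simp_all
      simp [filter_cons_of_neg hb, idxOf_cons_ne, hbp, hbq, ih]

section Swap

variable {l₁ l₂ : List α} {x y : α}

theorem idxOf_append_cons_cons (h : (l₁ ++ x :: y :: l₂).Nodup) :
    idxOf x (l₁ ++ x :: y :: l₂) = l₁.length ∧ idxOf y (l₁ ++ x :: y :: l₂) = l₁.length + 1 ∧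
      idxOf x (l₁ ++ y :: x :: l₂) = l₁.length + 1 ∧ idxOf y (l₁ ++ y :: x :: l₂) = l₁.length := by
  obtain ⟨hx, hy, hxy⟩ : x ∉ l₁ ∧ y ∉ l₁ ∧ x ≠ y := by
    simp only [nodup_append, nodup_cons, mem_cons] at h
    exact ⟨fun hx => h.2.2 x hx x (by simp) rfl, fun hy => h.2.2 y hy y (by simp) rfl,
      fun hxy => h.2.1.1 (Or.inl hxy)⟩
  simp [idxOf_append_of_notMem hx, idxOf_append_of_notMem hy, idxOf_cons_ne, hxy, Ne.symm hxy]

theorem idxOf_append_cons_cons_cases (h : (l₁ ++ x :: y :: l₂).Nodup) (u : α) :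
    (u = x ∧ idxOf u (l₁ ++ x :: y :: l₂) = l₁.length ∧
        idxOf u (l₁ ++ y :: x :: l₂) = l₁.length + 1) ∨
    (u = y ∧ idxOf u (l₁ ++ x :: y :: l₂) = l₁.length + 1 ∧
        idxOf u (l₁ ++ y :: x :: l₂) = l₁.length) ∨
    (idxOf u (l₁ ++ y :: x :: l₂) = idxOf u (l₁ ++ x :: y :: l₂) ∧
      (idxOf u (l₁ ++ x :: y :: l₂) < l₁.length ∨
        l₁.length + 2 ≤ idxOf u (l₁ ++ x :: y :: l₂))) := by
  obtain ⟨e₁, e₂, e₃, e₄⟩ := idxOf_append_cons_cons h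
  rcases eq_or_ne u x with rfl | hux
  · exact Or.inl ⟨rfl, e₁, e₃⟩
  rcases eq_or_ne u y with rfl | huy
  · exact Or.inr (Or.inl ⟨rfl, e₂, e₄⟩)
  refine Or.inr (Or.inr ?_)
  by_cases hu : u ∈ l₁
  · rw [idxOf_append_of_mem hu, idxOf_append_of_mem hu]
    exact ⟨rfl, Or.inl (idxOf_lt_length_of_mem hu)⟩
  · simp only [idxOf_append_of_notMem hu, idxOf_cons_ne _ (Ne.symm hux),
      idxOf_cons_ne _ (Ne.symm huy), true_and]
    omega

theorem idxOf_lt_idxOf_swap_iff (h : (l₁ ++ x :: y :: l₂).Nodup) {p q : α}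
    (hxy : ¬(p = x ∧ q = y)) (hyx : ¬(p = y ∧ q = x)) :
    idxOf p (l₁ ++ y :: x :: l₂) < idxOf q (l₁ ++ y :: x :: l₂) ↔
      idxOf p (l₁ ++ x :: y :: l₂) < idxOf q (l₁ ++ x :: y :: l₂) := by
  rcases idxOf_append_cons_cons_cases h p with ⟨hp, a₁, a₂⟩ | ⟨hp, a₁, a₂⟩ | ⟨a₁, a₂⟩ <;>
    rcases idxOf_append_cons_cons_cases h q with ⟨hq, b₁, b₂⟩ | ⟨hq, b₁, b₂⟩ | ⟨b₁, b₂⟩ <;>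
    first | omega | tauto

end Swap

def discordantPairs (R T : List α) : Finset (α × α) :=
  (R.toFinset ×ˢ R.toFinset).filter fun p =>
    idxOf p.1 R < idxOf p.2 R ∧ idxOf p.2 T < idxOf p.1 T

def kendallDist (R T : List α) : ℕ := (discordantPairs R T).card

def kendallDistOutside (B : Finset α) (R T : List α) : ℕ :=
  ((discordantPairs R T).filter fun p => ¬(p.1 ∈ B ∧ p.2 ∈ B)).card

section Kendall

variable {R T U : List α} {B : Finset α}

@[simp]
theorem mem_discordantPairs {p q : α} :
    (p, q) ∈ discordantPairs R T ↔
      p ∈ R ∧ q ∈ R ∧ idxOf p R < idxOf q R ∧ idxOf q T < idxOf p T := by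
  simp [discordantPairs, and_assoc]

theorem discordantPairs_self (R : List α) : discordantPairs R R = ∅ := by
  ext ⟨p, q⟩
  simp only [mem_discordantPairs, Finset.notMem_empty, iff_false]
  omega

theorem kendallDistOutside_self (B : Finset α) (R : List α) : kendallDistOutside B R R = 0 := by
  simp [kendallDistOutside, discordantPairs_self]

theorem discordantPairs_subset_union (hRT : R.toFinset = T.toFinset) :
    discordantPairs R U ⊆ discordantPairs R T ∪ discordantPairs T U := by
  rintro ⟨p, q⟩ h
  rw [mem_discordantPairs] at h
  obtain ⟨hp, hq, hR, hU⟩ := h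
  have hpT : p ∈ T := by simpa [hRT] using mem_toFinset.mpr hp
  have hqT : q ∈ T := by simpa [hRT] using mem_toFinset.mpr hq
  have hpq : p ≠ q := by rintro rfl; omega
  rcases idxOf_lt_or_gt_of_ne hpT hpq with h | h
  · exact Finset.mem_union_right _ (mem_discordantPairs.2 ⟨hpT, hqT, h, hU⟩)
  · exact Finset.mem_union_left _ (mem_discordantPairs.2 ⟨hp, hq, hR, h⟩)

theorem kendallDist_triangle (hRT : R.toFinset = T.toFinset) :
    kendallDist R U ≤ kendallDist R T + kendallDist T U :=
  (Finset.card_le_card (discordantPairs_subset_union hRT)).trans (Finset.card_union_le _ _)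

theorem kendallDistOutside_triangle (hRT : R.toFinset = T.toFinset) :
    kendallDistOutside B R U ≤ kendallDistOutside B R T + kendallDistOutside B T U := by
  unfold kendallDistOutside
  refine (Finset.card_le_card ?_).trans (Finset.card_union_le _ _)
  rw [← Finset.filter_union]
  exact Finset.filter_subset_filter _ (discordantPairs_subset_union hRT)

theorem discordantPairs_restrictOrd (R T : List α) (B : Finset α) :
    discordantPairs (restrictOrd R B) (restrictOrd T B) =
      (discordantPairs R T).filter fun p => p.1 ∈ B ∧ p.2 ∈ B := by
  ext ⟨p, q⟩
  simp only [mem_discordantPairs, Finset.mem_filter, restrictOrd, mem_filter, decide_eq_true_eq]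
  constructor
  · rintro ⟨⟨hp, hpB⟩, ⟨hq, hqB⟩, hR, hT⟩
    rw [idxOf_filter_lt_idxOf_filter_iff (by simpa using hpB) (by simpa using hqB)] at hR
    rw [idxOf_filter_lt_idxOf_filter_iff (by simpa using hqB) (by simpa using hpB)] at hT
    exact ⟨⟨hp, hq, hR, hT⟩, hpB, hqB⟩
  · rintro ⟨⟨hp, hq, hR, hT⟩, hpB, hqB⟩
    refine ⟨⟨hp, hpB⟩, ⟨hq, hqB⟩, ?_, ?_⟩
    · rwa [idxOf_filter_lt_idxOf_filter_iff (by simpa using hpB) (by simpa using hqB)]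
    · rwa [idxOf_filter_lt_idxOf_filter_iff (by simpa using hqB) (by simpa using hpB)]

theorem kendallDist_eq_restrictOrd_add (R T : List α) (B : Finset α) :
    kendallDist R T =
      kendallDist (restrictOrd R B) (restrictOrd T B) + kendallDistOutside B R T := by
  rw [kendallDist, kendallDist, kendallDistOutside, discordantPairs_restrictOrd,
    Finset.card_filter_add_card_filter_not]

end Kendall

section Alike

variable {l₁ l₂ : List α} {x y : α} {U V T : List α}

theorem discordantPairs_swap_subset (h : (l₁ ++ x :: y :: l₂).Nodup) :
    discordantPairs (l₁ ++ x :: y :: l₂) (l₁ ++ y :: x :: l₂) ⊆ {(x, y)} := by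
  rintro ⟨p, q⟩ hpq
  obtain ⟨-, -, hU, hV⟩ := mem_discordantPairs.1 hpq
  obtain ⟨e₁, e₂, e₃, e₄⟩ := idxOf_append_cons_cons h
  rw [Finset.mem_singleton, Prod.mk.injEq]
  by_contra hxy
  by_cases hyx : p = y ∧ q = x
  · obtain ⟨rfl, rfl⟩ := hyx
    omega
  · have := (idxOf_lt_idxOf_swap_iff h hxy hyx).2 hU
    omega

theorem Alike.kendallDist_le_one (hU : U.Nodup) (h : Alike U V) : kendallDist U V ≤ 1 := by
  obtain ⟨l₁, l₂, x, y, -, rfl, rfl⟩ := h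
  unfold kendallDist
  simpa using Finset.card_le_card (discordantPairs_swap_subset hU)

theorem kendallDist_swap_lt (h : (l₁ ++ x :: y :: l₂).Nodup) (hT : idxOf y T < idxOf x T) :
    kendallDist (l₁ ++ y :: x :: l₂) T < kendallDist (l₁ ++ x :: y :: l₂) T := by
  have hmem : ∀ u, u ∈ l₁ ++ y :: x :: l₂ ↔ u ∈ l₁ ++ x :: y :: l₂ :=
    fun u => ((Perm.swap x y l₂).append_left l₁).mem_iff
  obtain ⟨e₁, e₂, e₃, e₄⟩ := idxOf_append_cons_cons h
  refine Finset.card_lt_card ((Finset.ssubset_iff_of_subset ?_).2 ⟨(x, y), ?_, ?_⟩)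
  · rintro ⟨p, q⟩ hpq
    obtain ⟨hp, hq, hV, hpqT⟩ := mem_discordantPairs.1 hpq
    have hxy : ¬(p = x ∧ q = y) := by rintro ⟨rfl, rfl⟩; omega
    have hyx : ¬(p = y ∧ q = x) := by rintro ⟨rfl, rfl⟩; omega
    exact mem_discordantPairs.2
      ⟨(hmem p).1 hp, (hmem q).1 hq, (idxOf_lt_idxOf_swap_iff h hxy hyx).1 hV, hpqT⟩
  · exact mem_discordantPairs.2 ⟨by simp, by simp, by omega, hT⟩
  · rw [mem_discordantPairs]
    omega

theorem Alike.restrictOrd_eq_or_alike (hU : U.Nodup) (h : Alike U V) (B : Finset α) :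
    (restrictOrd U B = restrictOrd V B ∧ kendallDistOutside B U V ≤ 1) ∨
      (Alike (restrictOrd U B) (restrictOrd V B) ∧ kendallDistOutside B U V = 0) := by
  have hle : kendallDistOutside B U V ≤ 1 :=
    (Finset.card_le_card (Finset.filter_subset _ _)).trans (h.kendallDist_le_one hU)
  obtain ⟨l₁, l₂, x, y, hxy, rfl, rfl⟩ := h
  by_cases hB : x ∈ B ∧ y ∈ B
  · refine Or.inr ⟨⟨l₁.filter (· ∈ B), l₂.filter (· ∈ B), x, y, hxy, ?_, ?_⟩, ?_⟩
    · simp [restrictOrd, hB]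
    · simp [restrictOrd, hB]
    · refine Finset.card_eq_zero.2 (Finset.filter_eq_empty_iff.2 fun p hp => ?_)
      obtain rfl := Finset.mem_singleton.1 (discordantPairs_swap_subset hU hp)
      exact not_not.2 hB
  · refine Or.inl ⟨?_, hle⟩
    by_cases hx : x ∈ B <;> by_cases hy : y ∈ B <;> simp_all [restrictOrd]

end Alike

section Path

variable {A B : Finset α} {P : List (List α)} {l R T U V : List α}

theorem IsLinOrd.restrict (h : IsLinOrd A l) (hB : B ⊆ A) : IsLinOrd B (restrictOrd l B) := by
  refine ⟨h.1.filter _, ?_⟩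
  rw [restrictOrd, toFinset_filter, h.2]
  ext u
  simpa using fun hu => hB hu

theorem isPath_singleton_iff : IsPath A [U] R T ↔ IsLinOrd A U ∧ R = U ∧ T = U := by
  constructor
  · rintro ⟨⟨-, hlin, -⟩, hhead, hlast⟩
    exact ⟨hlin U (mem_singleton_self U), (Option.some.inj hhead).symm,
      (Option.some.inj hlast).symm⟩
  · rintro ⟨hU, rfl, rfl⟩
    exact ⟨⟨cons_ne_nil _ _, by simpa using hU, isChain_singleton _⟩, rfl, rfl⟩

theorem isPath_cons_cons_iff :
    IsPath A (U :: V :: P) R T ↔ R = U ∧ IsLinOrd A U ∧ Alike U V ∧ IsPath A (V :: P) V T := by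
  constructor
  · rintro ⟨⟨-, hlin, hchain⟩, hhead, hlast⟩
    obtain ⟨hUV, hchain⟩ := isChain_cons_cons.1 hchain
    exact ⟨(Option.some.inj hhead).symm, hlin U mem_cons_self, hUV,
      ⟨cons_ne_nil _ _, fun l hl => hlin l (mem_cons_of_mem _ hl), hchain⟩, rfl,
      by simpa using hlast⟩
  · rintro ⟨rfl, hU, hUV, ⟨-, hlin, hchain⟩, -, hlast⟩
    exact ⟨⟨cons_ne_nil _ _, forall_mem_cons.2 ⟨hU, hlin⟩, isChain_cons_cons.2 ⟨hUV, hchain⟩⟩,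
      rfl, by simpa using hlast⟩

theorem IsPath.cons (hU : IsLinOrd A U) (hUV : Alike U V) (h : IsPath A P V T) :
    IsPath A (U :: P) U T := by
  rcases P with _ | ⟨W, P⟩
  · exact absurd rfl h.1.1
  · obtain rfl : W = V := by simpa using h.2.1
    exact isPath_cons_cons_iff.2 ⟨rfl, hU, hUV, h⟩

theorem IsPath.isLinOrd_left (h : IsPath A P R T) : IsLinOrd A R :=
  h.1.2.1 R (mem_of_mem_head? h.2.1)

theorem IsPath.isLinOrd_right (h : IsPath A P R T) : IsLinOrd A T :=
  h.1.2.1 T (mem_of_getLast? h.2.2)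

theorem IsPath.kendallDist_lt_length (h : IsPath A P R T) : kendallDist R T < P.length := by
  induction P generalizing R with
  | nil => exact absurd rfl h.1.1
  | cons U P ih =>
    rcases P with _ | ⟨V, P⟩
    · obtain ⟨-, rfl, rfl⟩ := isPath_singleton_iff.1 h
      simp [kendallDist, discordantPairs_self]
    · obtain ⟨rfl, hU, hUV, hP⟩ := isPath_cons_cons_iff.1 h
      have htri := kendallDist_triangle (U := T) (hU.2.trans hP.isLinOrd_left.2.symm)
      have hstep := hUV.kendallDist_le_one hU.1
      have := ih hP
      simp only [length_cons] at this ⊢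
      omega

theorem restrictPath_cons_cons (B : Finset α) :
    restrictPath (U :: V :: P) B =
      if restrictOrd U B = restrictOrd V B then restrictPath (V :: P) B
      else restrictOrd U B :: restrictPath (V :: P) B := by
  unfold restrictPath
  rw [map_cons, map_cons, destutter_cons_cons]
  by_cases h : restrictOrd U B = restrictOrd V B
  · rw [if_neg (not_not.2 h), if_pos h, h, destutter_cons']
  · rw [if_pos h, if_neg h, destutter_cons']

theorem exists_mem_of_mem_restrictPath (hl : l ∈ restrictPath P B) :
    ∃ m ∈ P, restrictOrd m B = l :=
  mem_map.1 ((destutter_sublist _ _).subset hl)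

theorem IsPath.restrict (h : IsPath A P R T) (hB : B ⊆ A) :
    IsPath B (restrictPath P B) (restrictOrd R B) (restrictOrd T B) := by
  induction P generalizing R with
  | nil => exact absurd rfl h.1.1
  | cons U P ih =>
    rcases P with _ | ⟨V, P⟩
    · obtain ⟨hU, rfl, rfl⟩ := isPath_singleton_iff.1 h
      exact isPath_singleton_iff.2 ⟨hU.restrict hB, rfl, rfl⟩
    · obtain ⟨rfl, hU, hUV, hP⟩ := isPath_cons_cons_iff.1 h
      rw [restrictPath_cons_cons]
      rcases hUV.restrictOrd_eq_or_alike hU.1 B with ⟨heq, -⟩ | ⟨hUV', -⟩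
      · rw [if_pos heq, heq]
        exact ih hP
      · rw [if_neg hUV'.ne]
        exact (ih hP).cons (hU.restrict hB) hUV'

theorem IsPath.length_restrictPath_add_le (h : IsPath A P R T) (B : Finset α) :
    (restrictPath P B).length + kendallDistOutside B R T ≤ P.length := by
  induction P generalizing R with
  | nil => exact absurd rfl h.1.1
  | cons U P ih =>
    rcases P with _ | ⟨V, P⟩
    · obtain ⟨-, rfl, rfl⟩ := isPath_singleton_iff.1 h
      simp [restrictPath, kendallDistOutside_self]
    · obtain ⟨rfl, hU, hUV, hP⟩ := isPath_cons_cons_iff.1 h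
      have htri := kendallDistOutside_triangle (B := B) (U := T)
        (hU.2.trans hP.isLinOrd_left.2.symm)
      have := ih hP
      rw [restrictPath_cons_cons]
      rcases hUV.restrictOrd_eq_or_alike hU.1 B with ⟨heq, hle⟩ | ⟨hUV', h0⟩
      · rw [if_pos heq]
        simp only [length_cons] at this ⊢
        omega
      · rw [if_neg hUV'.ne]
        simp only [length_cons] at this ⊢
        omega

end Path

section Geodesic

variable {A B : Finset α} {P : List (List α)} {R T : List α}

theorem pairwise_idxOf_lt {l : List α} (hl : l.Nodup) :
    l.Pairwise fun u v => idxOf u l < idxOf v l := by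
  rw [pairwise_iff_getElem]
  intro i j hi hj hij
  rwa [hl.idxOf_getElem, hl.idxOf_getElem]

theorem exists_adjacent_inversion (hR : IsLinOrd A R) (hT : IsLinOrd A T) (hne : R ≠ T) :
    ∃ l₁ x y l₂, R = l₁ ++ x :: y :: l₂ ∧ idxOf y T < idxOf x T := by
  by_contra! hsorted
  have hRT : R.toFinset = T.toFinset := hR.2.trans hT.2.symm
  have hchain : R.IsChain fun u v => idxOf u T < idxOf v T := by
    refine isChain_iff_forall_rel_of_append_cons_cons.2 fun u v l₁ l₂ hR' => ?_
    have huv : u ≠ v := by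
      rintro rfl
      have hnd : (u :: u :: l₂).Nodup := (hR' ▸ hR.1).sublist (sublist_append_right l₁ _)
      exact (nodup_cons.1 hnd).1 mem_cons_self
    have huT : u ∈ T := by
      rw [← mem_toFinset, ← hRT, mem_toFinset, hR']
      simp
    exact (idxOf_lt_or_gt_of_ne huT huv).resolve_right (not_lt.2 (hsorted l₁ u v l₂ hR'))
  have : Trans (fun u v => idxOf u T < idxOf v T) (fun u v => idxOf u T < idxOf v T)
      (fun u v => idxOf u T < idxOf v T) := ⟨Nat.lt_trans⟩
  have : Std.Antisymm fun u v => idxOf u T < idxOf v T :=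
    ⟨fun _ _ h h' => absurd (h.trans h') (lt_irrefl _)⟩
  exact hne (Perm.eq_of_pairwise' (isChain_iff_pairwise.1 hchain) (pairwise_idxOf_lt hT.1)
    (perm_of_nodup_nodup_toFinset_eq hR.1 hT.1 hRT))

/-- Bubble sort: keep swapping an adjacent pair that `T` ranks the other way. -/
theorem exists_isPath_length_le (hR : IsLinOrd A R) (hT : IsLinOrd A T) :
    ∃ P, IsPath A P R T ∧ P.length ≤ kendallDist R T + 1 := by
  induction hk : kendallDist R T using Nat.strong_induction_on generalizing R with
  | _ k ih =>
  by_cases hRT : R = T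
  · subst hRT
    exact ⟨[R], isPath_singleton_iff.2 ⟨hR, rfl, rfl⟩, by simp⟩
  obtain ⟨l₁, x, y, l₂, rfl, hyx⟩ := exists_adjacent_inversion hR hT hRT
  have hperm := (Perm.swap x y l₂).append_left l₁
  have hR' : IsLinOrd A (l₁ ++ y :: x :: l₂) :=
    ⟨hperm.nodup_iff.2 hR.1, (toFinset_eq_of_perm _ _ hperm).trans hR.2⟩
  have hlt := kendallDist_swap_lt hR.1 hyx
  obtain ⟨P, hP, hlen⟩ := ih _ (hk ▸ hlt) hR' rfl
  have hxy : x ≠ y := by rintro rfl; omega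
  exact ⟨_, hP.cons hR ⟨l₁, l₂, x, y, hxy, rfl, rfl⟩, by simp only [length_cons]; omega⟩

theorem IsGeodesic.length_le (h : IsGeodesic A P R T) : P.length ≤ kendallDist R T + 1 := by
  obtain ⟨Q, hQ, hlen⟩ := exists_isPath_length_le h.1.isLinOrd_left h.1.isLinOrd_right
  exact (h.2 Q hQ).trans hlen

theorem IsPath.isGeodesic_of_length_le (h : IsPath A P R T)
    (hlen : P.length ≤ kendallDist R T + 1) : IsGeodesic A P R T :=
  ⟨h, fun _ hQ => hlen.trans hQ.kendallDist_lt_length⟩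

theorem DirectlyConnectedDomain.restrict {D : Set (List α)} (hD : DirectlyConnectedDomain A D)
    (hB : B ⊆ A) : DirectlyConnectedDomain B (restrictDom D B) := by
  rintro _ ⟨R, hR, rfl⟩ _ ⟨T, hT, rfl⟩
  obtain ⟨P, hP, hPD⟩ := hD R hR T hT
  refine ⟨restrictPath P B, (hP.1.restrict hB).isGeodesic_of_length_le ?_, ?_⟩
  · have hPlen := hP.length_le
    have hrestrict := hP.1.length_restrictPath_add_le B
    have hsplit := kendallDist_eq_restrictOrd_add R T B
    omega
  · intro l hl
    obtain ⟨m, hm, rfl⟩ := exists_mem_of_mem_restrictPath hl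
    exact ⟨m, hPD m hm, rfl⟩

end Geodesic

end

theorem directlyConnected_restriction_general [DecidableEq α] (A : Finset α)
    (D : Set (List α))
    (a : α) (hconn : DirectlyConnectedDomain A D) :
    DirectlyConnectedDomain (A.erase a) (restrictDom D (A.erase a)) :=
  hconn.restrict (A.erase_subset a)

/-- If `A` has at least four alternatives, `D ⊆ L(A)` is a domain,
`a ∈ A`, and `D` is directly connected, then `D_{-a}` is directly connected. -/
theorem directlyConnected_restriction [DecidableEq α] (A : Finset α)
    (hA : 4 ≤ A.card) (D : Set (List α)) (hD : ∀ l ∈ D, IsLinOrd A l)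
    (a : α) (ha : a ∈ A) (hconn : DirectlyConnectedDomain A D) :
    DirectlyConnectedDomain (A.erase a) (restrictDom D (A.erase a)) :=
  directlyConnected_restriction_general A D a hconn
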